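/- arXiv:1710.06010 — 9 statements merged into one kernel-verified Lean document; each statement's English description precedes it below -/
import Mathlib

section
/- Let R be a commutative ring, M and N R-modules with N finitely generated, and let f : M → N be R-linear. If the localization of f at some prime p is surjective, then there exists s ∈ R \ p such that for every prime q not containing s, the localization of f at q is surjective. -/
/-- Surjectivity of the localized map in terms of elements. -/
lemma aux_surj_iff {R M N : Type*} [CommRing R] [AddCommGroup M] [Module R M]
    [AddCommGroup N] [Module R N] (f : M →ₗ[R] N) (S : Submonoid R) :
    Function.Surjective (LocalizedModule.map S f) ↔
      ∀ n : N, ∃ r ∈ S, r • n ∈ LinearMap.range f := by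
  constructor
  · intro H n
    obtain ⟨x, hx⟩ := H (LocalizedModule.mk n 1)
    obtain ⟨⟨m, s⟩, rfl⟩ : ∃ y : M × S, LocalizedModule.mk y.1 y.2 = x :=
      LocalizedModule.induction_on (fun m s ↦ ⟨(m, s), rfl⟩) x
    rw [LocalizedModule.map_mk, LocalizedModule.mk_eq] at hx
    obtain ⟨u, hu⟩ := hx
    refine ⟨(u * s : S), (u * s).2, ⟨u • m, ?_⟩⟩
    simpa [Submonoid.smul_def, mul_smul, map_smul] using hu
  · intro H y
    obtain ⟨⟨n, t⟩, rfl⟩ : ∃ x : N × S, LocalizedModule.mk x.1 x.2 = y :=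
      LocalizedModule.induction_on (fun n t ↦ ⟨(n, t), rfl⟩) y
    obtain ⟨r, hr, m, hm⟩ := H n
    refine ⟨LocalizedModule.mk m (⟨r, hr⟩ * t), ?_⟩
    rw [LocalizedModule.map_mk, hm]
    rw [show (⟨r, hr⟩ * t : S) = ⟨r, hr⟩ * t from rfl,
      ← LocalizedModule.mk_cancel_common_left ⟨r, hr⟩ t n]
    rfl

/-- If `N` is finitely generated and the localization of `f : M →ₗ[R] N` at a prime `p`
is surjective, then there is `s ∈ R \ p` such that the localization of `f` at every
prime `q` with `s ∉ q` is surjective. -/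
theorem stmt_1 {R M N : Type*} [CommRing R] [AddCommGroup M] [Module R M]
    [AddCommGroup N] [Module R N] [Module.Finite R N]
    (f : M →ₗ[R] N) (p : Ideal R) [p.IsPrime]
    (h : Function.Surjective (LocalizedModule.map p.primeCompl f)) :
    ∃ s : R, s ∉ p ∧ ∀ (q : Ideal R) (_ : q.IsPrime), s ∉ q →
      Function.Surjective (LocalizedModule.map q.primeCompl f) := by
  set C := N ⧸ LinearMap.range f with hC
  have hfin : Module.Finite R C := Module.Finite.quotient R _
  -- `C_p` is trivial
  have hsub : Subsingleton (LocalizedModule p.primeCompl C) := by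
    rw [LocalizedModule.subsingleton_iff]
    intro c
    obtain ⟨n, rfl⟩ := Submodule.Quotient.mk_surjective _ c
    obtain ⟨r, hr, hmem⟩ := (aux_surj_iff f p.primeCompl).mp h n
    exact ⟨r, hr, by rwa [← Submodule.Quotient.mk_smul, Submodule.Quotient.mk_eq_zero]⟩
  -- so the annihilator of `C` is not contained in `p`
  have : (⟨p, inferInstance⟩ : PrimeSpectrum R) ∉ Module.support R C :=
    Module.notMem_support_iff.mpr hsub
  rw [Module.mem_support_iff_of_finite] at this
  obtain ⟨s, hs, hsp⟩ := SetLike.not_le_iff_exists.mp this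
  refine ⟨s, hsp, fun q hq hsq ↦ ?_⟩
  rw [aux_surj_iff]
  intro n
  refine ⟨s, hsq, ?_⟩
  have := Module.mem_annihilator.mp hs (Submodule.Quotient.mk (p := LinearMap.range f) n)
  rwa [← Submodule.Quotient.mk_smul, Submodule.Quotient.mk_eq_zero] at this
end

section
/- Let R be a commutative ring, N a finitely generated R-module, and B : N^n → N^{n+1} a surjective R-linear map for some positive integer n. Then N = 0. -/
/-- If `N` is a finitely generated module over a commutative ring `R` and there is a
surjective `R`-linear map `N^n → N^(n+1)` for some positive integer `n`, then `N = 0`. -/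
theorem stmt_3 {R N : Type*} [CommRing R] [AddCommGroup N] [Module R N] [Module.Finite R N]
    {n : ℕ} (hn : 0 < n) (B : (Fin n → N) →ₗ[R] (Fin (n + 1) → N))
    (hB : Function.Surjective B) :
    Subsingleton N := by
  let π : (Fin (n + 1) → N) →ₗ[R] (Fin n → N) :=
    LinearMap.funLeft R N Fin.castSucc
  have hπ : Function.Surjective π :=
    LinearMap.funLeft_surjective_of_injective R N _ (Fin.castSucc_injective n)
  have hf : Function.Surjective (π ∘ₗ B) := hπ.comp hB
  have hinj : Function.Injective (π ∘ₗ B) :=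
    OrzechProperty.injective_of_surjective_endomorphism _ hf
  constructor
  intro a b
  suffices h : ∀ x : N, x = 0 by rw [h a, h b]
  intro x
  obtain ⟨v, hv⟩ := hB (fun i => if i = Fin.last n then x else 0)
  have hv0 : v = 0 := by
    apply hinj
    simp only [LinearMap.comp_apply, hv, map_zero]
    ext i
    simp [π, LinearMap.funLeft, Fin.ne_of_lt (Fin.castSucc_lt_last i)]
  rw [hv0, map_zero] at hv
  have := congrFun hv (Fin.last n)
  simpa using this.symm
end

section
/- Let R be a commutative Noetherian ring and N a finitely generated R-module. Then the set X of prime ideals p of R such that p lies in the support of N and p is an intersection of maximal ideals of R has the property: every prime ideal of R that is an intersection of members of X belongs to X. -/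
/-- For a commutative Noetherian ring `R` and a finitely generated `R`-module `N`, the set
`X` of primes `p` lying in the support of `N` (i.e. `N_p ≠ 0`) that are intersections of
maximal ideals is closed under the following operation: any prime ideal of `R` that is an
intersection of members of `X` belongs to `X`. -/
theorem stmt_4 {R N : Type*} [CommRing R] [IsNoetherianRing R]
    [AddCommGroup N] [Module R N] [Module.Finite R N] :
    ∀ (X : Set (Ideal R)),
      X = {p : Ideal R | ∃ hp : p.IsPrime,
        Nontrivial (LocalizedModule (@Ideal.primeCompl R _ p hp) N) ∧
        ∃ S : Set (Ideal R), (∀ m ∈ S, m.IsMaximal) ∧ p = sInf S} →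
      ∀ (q : Ideal R), q.IsPrime → (∃ T : Set (Ideal R), T ⊆ X ∧ q = sInf T) → q ∈ X := by
  intro X hX q hq ⟨T, hTX, hqT⟩
  subst hX
  refine ⟨hq, ?_, ?_⟩
  · -- q ∈ support N since ann N ≤ q
    have hann : Module.annihilator R N ≤ q := by
      rw [hqT, le_sInf_iff]
      intro p hpT
      obtain ⟨hp, hloc, -⟩ := hTX hpT
      exact Module.annihilator_le_of_mem_support
        (p := ⟨p, hp⟩) (Module.mem_support_iff.mpr hloc)
    have : (⟨q, hq⟩ : PrimeSpectrum R) ∈ Module.support R N := by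
      rw [Module.support_eq_zeroLocus]
      exact hann
    exact Module.mem_support_iff.mp this
  · -- q is an intersection of maximal ideals
    choose hp hloc S hS hpS using fun p (hpT : p ∈ T) => hTX hpT
    refine ⟨⋃ p ∈ T, ⋃ (h : p ∈ T), S p h, ?_, ?_⟩
    · intro m hm
      simp only [Set.mem_iUnion] at hm
      obtain ⟨p, hpT, hpT', hmS⟩ := hm
      exact hS p hpT' m hmS
    · rw [hqT]
      apply le_antisymm
      · rw [le_sInf_iff]
        intro m hm
        simp only [Set.mem_iUnion] at hm
        obtain ⟨p, hpT, hpT', hmS⟩ := hm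
        exact sInf_le_of_le hpT (by rw [hpS p hpT']; exact sInf_le hmS)
      · rw [le_sInf_iff]
        intro p hpT
        rw [hpS p hpT]
        refine le_sInf fun m hm => sInf_le ?_
        simp only [Set.mem_iUnion]
        exact ⟨p, hpT, hpT, hm⟩
end

section
/- Let R be a Dedekind domain and let I and J be nonzero ideals of R. Then there exists a nonzero ideal K of R such that I is isomorphic to KJ as R-modules. -/
/-- If `I` and `J` are nonzero ideals of a Dedekind domain `R`, then there is a nonzero
ideal `K` of `R` with `I ≅ KJ` as `R`-modules. -/
theorem stmt_11 {R : Type*} [CommRing R] [IsDomain R] [IsDedekindDomain R]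
    (I J : Ideal R) (hI : I ≠ ⊥) (hJ : J ≠ ⊥) :
    ∃ K : Ideal R, K ≠ ⊥ ∧ Nonempty (↥I ≃ₗ[R] ↥(K * J)) := by
  obtain ⟨a, haJ, ha0⟩ := Submodule.exists_mem_ne_zero_of_ne_bot hJ
  have hle : Ideal.span {a} ≤ J := (Ideal.span_singleton_le_iff_mem J).mpr haJ
  obtain ⟨C, hC⟩ := Ideal.dvd_iff_le.mpr hle
  have hC0 : C ≠ ⊥ := by
    rintro rfl
    rw [Ideal.mul_bot] at hC
    exact ha0 (by simpa [Ideal.span_eq_bot] using hC)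
  refine ⟨C * I, mul_ne_zero hC0 hI, ⟨?_⟩⟩
  have hprod : C * I * J = Ideal.span {a} * I := by
    rw [hC]; ring
  refine LinearEquiv.ofBijective
    (LinearMap.codRestrict (C * I * J : Ideal R)
      ((Submodule.subtype I).smulRight a) ?_) ⟨?_, ?_⟩
  · intro x
    show (x : R) • a ∈ C * I * J
    rw [smul_eq_mul, mul_comm ((x : R)) a, hprod]
    exact Ideal.mul_mem_mul (Ideal.mem_span_singleton_self a) x.2
  · intro x y hxy
    have h : (x : R) * a = (y : R) * a := by
      simpa [smul_eq_mul] using congrArg Subtype.val hxy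
    exact Subtype.ext (mul_right_cancel₀ ha0 h)
  · rintro ⟨z, hz⟩
    rw [hprod] at hz
    obtain ⟨w, hwI, hw⟩ := Ideal.mem_span_singleton_mul.mp hz
    exact ⟨⟨w, hwI⟩, Subtype.ext (by simpa [smul_eq_mul, mul_comm] using hw)⟩
end

section
/- Let R be a Dedekind domain, I a nonzero ideal of R, and M a cyclic torsion R-module. Then there exists a surjective R-linear map from I to M. -/
/-!
Write `M = R ∙ x` and pick `r ≠ 0` with `r • x = 0`. Every ideal class of a Dedekind domain
contains an ideal coprime to `(r)`: there are `a` and `C` with `(a) = I * C` and `C + (r) = R`.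
Choosing `c ∈ C` with `c ≡ 1 mod r`, multiplication by `c / a` is an `R`-linear map `I → R`
sending `a` to `c`, and composing it with `t ↦ t • x` gives a map `I → M` hitting `c • x = x`.
-/

namespace IsDedekindDomain

variable {R : Type*} [CommRing R] [IsDedekindDomain R] {I N : Ideal R}

theorem exists_span_singleton_eq_mul_sup_eq_top (hI : I ≠ ⊥) (hN : N ≠ ⊥) :
    ∃ a C, Ideal.span {a} = I * C ∧ C ⊔ N = ⊤ := by
  obtain ⟨a, ha⟩ := exists_sup_span_eq (Ideal.mul_le_left : I * N ≤ I)
    (mul_ne_zero hI hN)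
  obtain ⟨C, hC⟩ : I ∣ Ideal.span {a} := Ideal.dvd_iff_le.mpr (ha ▸ le_sup_right)
  refine ⟨a, C, hC, mul_left_cancel₀ hI ?_⟩
  rw [Ideal.mul_sup, ← hC, sup_comm, ha, Ideal.mul_top]

theorem exists_linearMap_range_sup_eq_top (hI : I ≠ ⊥) (hN : N ≠ ⊥) :
    ∃ φ : I →ₗ[R] R, LinearMap.range φ ⊔ N = ⊤ := by
  obtain ⟨a, C, haC, hCN⟩ := exists_span_singleton_eq_mul_sup_eq_top hI hN
  by_cases ha : a = 0
  · have hC : C = ⊥ := by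
      simpa [ha, eq_comm (a := ⊥), Ideal.mul_eq_bot, hI] using haC
    exact ⟨0, by simpa [hC] using hCN⟩
  obtain ⟨c, hc, n, hn, hcn⟩ := Submodule.mem_sup.mp (hCN ▸ Submodule.mem_top (x := (1 : R)))
  have hcI : ∀ y : I, c * y ∈ Ideal.span {a} := fun y ↦ by
    rw [haC, mul_comm c]
    exact Ideal.mul_mem_mul y.2 hc
  let φ : I →ₗ[R] R := (LinearEquiv.toSpanNonzeroSingleton R R a ha).symm ∘ₗ
    (LinearMap.mulLeft R c ∘ₗ I.subtype).codRestrict (Ideal.span {a}) hcI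
  have haI : a ∈ I := Ideal.mul_le_left (haC ▸ Ideal.mem_span_singleton_self a)
  have hφa : φ ⟨a, haI⟩ = c := (LinearEquiv.symm_apply_eq _).mpr rfl
  exact ⟨φ, (Ideal.eq_top_iff_one _).mpr (hcn ▸ Submodule.add_mem_sup ⟨_, hφa⟩ hn)⟩

end IsDedekindDomain

theorem stmt_12_general {R M : Type*} [CommRing R] [IsDedekindDomain R]
    [AddCommGroup M] [Module R M]
    (I : Ideal R) (hI : I ≠ ⊥)
    (hcyc : ∃ x : M, Submodule.span R {x} = ⊤)
    (htor : ∀ x : M, ∃ r : R, r ≠ 0 ∧ r • x = 0) :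
    ∃ f : ↥I →ₗ[R] M, Function.Surjective f := by
  obtain ⟨x, hx⟩ := hcyc
  obtain ⟨r, hr, hrx⟩ := htor x
  obtain ⟨φ, hφ⟩ := IsDedekindDomain.exists_linearMap_range_sup_eq_top hI
    (N := Ideal.span {r}) (by simpa using hr)
  let g := LinearMap.toSpanSingleton R M x
  have hrg : Submodule.map g (Ideal.span {r}) = ⊥ := by
    simp [Ideal.span, Submodule.map_span, g, hrx]
  refine ⟨g ∘ₗ φ, LinearMap.range_eq_top.mp ?_⟩
  rw [LinearMap.range_comp, ← sup_bot_eq (Submodule.map g _), ← hrg, ← Submodule.map_sup, hφ,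
    Submodule.map_top, LinearMap.range_toSpanSingleton, hx]

/-- If `I` is a nonzero ideal of a Dedekind domain `R` and `M` is a cyclic torsion
`R`-module, then there is a surjective `R`-linear map from `I` to `M`. -/
theorem stmt_12 {R M : Type*} [CommRing R] [IsDomain R] [IsDedekindDomain R]
    [AddCommGroup M] [Module R M]
    (I : Ideal R) (hI : I ≠ ⊥)
    (hcyc : ∃ x : M, Submodule.span R {x} = ⊤)
    (htor : ∀ x : M, ∃ r : R, r ≠ 0 ∧ r • x = 0) :
    ∃ f : ↥I →ₗ[R] M, Function.Surjective f :=
  stmt_12_general I hI hcyc htor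
end

section
/- Let R be a Dedekind domain and M a finitely generated torsion R-module. Let u be a positive integer such that for every associated prime m of M, the minimal number of generators of the localization M_m over R_m is at most u. Then the minimal number of generators of M over R is at most u. -/
/-!
Over a Dedekind domain the torsion module `M` is the direct sum of its primary components
`N p = M[p ^ e p]`, and a nonzero component forces `p` to be an associated prime. Elements
outside `p` act invertibly on `N p`, so numerators of `u` generators of `M_p` generate `N p` over
`R`. By the Chinese remainder theorem there are scalars `c p` acting as the projection of `M`
onto `N p`; adding up the `j`-th generators of all components therefore gives `u` elements whose
span contains every `N p`.
-/

open Submodule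
open scoped Function

theorem Finset.exists_fin_subset_range {α : Type*} [Zero α] (t : Finset α) {u : ℕ}
    (ht : t.card ≤ u) : ∃ g : Fin u → α, (t : Set α) ⊆ Set.range g := by
  refine ⟨Function.extend (Fin.castLE ht) (fun i => (t.equivFin.symm i : α)) 0,
    fun x hx => ⟨Fin.castLE ht (t.equivFin ⟨x, hx⟩), ?_⟩⟩
  rw [(Fin.castLE_injective ht).extend_apply, Equiv.symm_apply_apply]

theorem Ideal.IsMaximal.span_singleton_sup_pow_eq_top {R : Type*} [CommRing R] {p : Ideal R}
    (hp : p.IsMaximal) {σ : R} (hσ : σ ∉ p) (e : ℕ) : Ideal.span {σ} ⊔ p ^ e = ⊤ :=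
  Ideal.sup_pow_eq_top <| (Ideal.eq_top_iff_one _).mpr <|
    Ideal.mem_span_singleton_sup.mpr (hp.exists_inv hσ)

section Module

variable {R M : Type*} [CommRing R] [AddCommGroup M] [Module R M]

theorem Submodule.mem_of_smul_mem_of_mem_torsionBySet {I : Ideal R} {σ : R}
    (hσ : Ideal.span {σ} ⊔ I = ⊤) {y : M} (hy : y ∈ torsionBySet R M I) {Q : Submodule R M}
    (hQ : σ • y ∈ Q) : y ∈ Q := by
  obtain ⟨c, a, ha, hca⟩ := Ideal.mem_span_singleton_sup.mp (hσ ▸ Submodule.mem_top (x := 1))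
  have hay : a • y = 0 := (mem_torsionBySet_iff _ _).mp hy ⟨a, ha⟩
  have hy_eq : y = c • σ • y := by
    rw [smul_smul, ← add_zero ((c * σ) • y), ← hay, ← add_smul, hca, one_smul]
  exact hy_eq ▸ Q.smul_mem c hQ

theorem LocalizedModule.exists_finset_smul_mem_span {S : Submonoid R}
    (s : Finset (LocalizedModule S M))
    (hs : span (Localization S) (s : Set (LocalizedModule S M)) = ⊤) :
    ∃ t : Finset M, t.card ≤ s.card ∧ ∀ y : M, ∃ σ : S, σ • y ∈ span R (t : Set M) := by
  classical
  set f := LocalizedModule.mkLinearMap S M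
  choose frac hfrac using IsLocalizedModule.surj S f
  set t := s.image fun z => (frac z).1
  refine ⟨t, Finset.card_image_le, fun y => ?_⟩
  have htop : (span R (t : Set M)).localized' (Localization S) S f = ⊤ := by
    rw [eq_top_iff, ← hs, localized'_span, span_le]
    intro z hz
    rw [SetLike.mem_coe, ← IsLocalization.smul_mem_iff (s := (frac z).2), hfrac]
    exact subset_span ⟨_, by simpa [t] using ⟨z, hz, rfl⟩, rfl⟩
  obtain ⟨m, hm, σ, hmσ⟩ := (mem_localized' _ _ _ _ _).mp (htop ▸ mem_top (x := f y))
  rw [IsLocalizedModule.mk'_eq_iff, Submonoid.smul_def, ← map_smul] at hmσ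
  obtain ⟨c, hc⟩ := IsLocalizedModule.exists_of_eq (S := S) hmσ
  exact ⟨c * σ, by rw [mul_smul, Submonoid.smul_def σ, ← hc]; exact smul_mem _ _ hm⟩

theorem Submodule.exists_fin_torsionBySet_pow_le_span {p : Ideal R} [hp : p.IsMaximal]
    (e : ℕ) {u : ℕ} (s : Finset (LocalizedModule p.primeCompl M)) (hsu : s.card ≤ u)
    (hs : span (Localization p.primeCompl) (s : Set (LocalizedModule p.primeCompl M)) = ⊤) :
    ∃ g : Fin u → M, torsionBySet R M ↑(p ^ e) ≤ span R (Set.range g) := by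
  obtain ⟨t, htcard, ht⟩ := LocalizedModule.exists_finset_smul_mem_span s hs
  obtain ⟨g, hg⟩ := t.exists_fin_subset_range (htcard.trans hsu)
  refine ⟨g, fun y hy => ?_⟩
  obtain ⟨σ, hσ⟩ := ht y
  exact mem_of_smul_mem_of_mem_torsionBySet (hp.span_singleton_sup_pow_eq_top σ.2 e) hy
    (span_mono hg hσ)

theorem Ideal.IsMaximal.mem_associatedPrimes_of_torsionBySet_pow_ne_bot [IsNoetherianRing R]
    {p : Ideal R} (hp : p.IsMaximal) {e : ℕ} (h : torsionBySet R M ↑(p ^ e) ≠ ⊥) :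
    p ∈ associatedPrimes R M := by
  obtain ⟨y, hy, hy0⟩ := (Submodule.ne_bot_iff _).mp h
  obtain ⟨P, hP, hle⟩ := exists_le_isAssociatedPrime_of_isNoetherianRing R y hy0
  have hpow : p ^ e ≤ P := fun a ha =>
    hle ((mem_colon_singleton (R := R)).mpr ((mem_torsionBySet_iff _ _).mp hy ⟨a, ha⟩))
  rwa [hp.eq_of_le hP.isPrime.ne_top (hP.isPrime.le_of_pow_le hpow)]

theorem Submodule.exists_fin_span_eq_top_of_iSup_torsionBySet {ι : Type*} [Fintype ι]
    {I : ι → Ideal R} (hI : Pairwise (IsCoprime on I)) (hM : ⨆ i, torsionBySet R M (I i) = ⊤)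
    {u : ℕ} (g : ι → Fin u → M) (hg : ∀ i, torsionBySet R M (I i) ≤ span R (Set.range (g i))) :
    ∃ G : Fin u → M, span R (Set.range G) = ⊤ := by
  classical
  set N := fun i => torsionBySet R M (I i)
  -- Chinese remainder theorem: `c i ≡ 1 mod I i` and `c i ≡ 0 mod I j` for `j ≠ i`.
  choose c hc using fun i => Ideal.exists_forall_sub_mem_ideal hI (Pi.single i 1)
  have hc_self : ∀ i, ∀ y ∈ N i, c i • y = y := fun i y hy => by
    have := (mem_torsionBySet_iff _ _).mp hy ⟨_, by simpa using hc i i⟩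
    rwa [sub_smul, one_smul, sub_eq_zero] at this
  have hc_ne : ∀ i j, i ≠ j → ∀ y ∈ N j, c i • y = 0 := fun i j hij y hy =>
    (mem_torsionBySet_iff _ _).mp hy ⟨_, by simpa [Pi.single_apply, hij.symm] using hc i j⟩
  have hc_mem : ∀ i m, c i • m ∈ N i := fun i m => by
    induction (hM ▸ mem_top : m ∈ ⨆ j, N j) using iSup_induction' with
    | mem j y hy =>
      obtain rfl | hij := eq_or_ne i j
      · rwa [hc_self i y hy]
      · rw [hc_ne i j hij y hy]; exact zero_mem _
    | zero => rw [smul_zero]; exact zero_mem _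
    | add y z _ _ hy hz => rw [smul_add]; exact add_mem hy hz
  set G : Fin u → M := fun j => ∑ i, c i • g i j
  have hcG : ∀ k j, c k • G j = c k • g k j := fun k j => by
    rw [Finset.smul_sum, Finset.sum_eq_single k
      (fun i _ hik => hc_ne k i hik.symm _ (hc_mem i _)) (by simp), hc_self k _ (hc_mem k _)]
  refine ⟨G, eq_top_iff.mpr (hM ▸ iSup_le fun k y hy => ?_)⟩
  have hspan : span R (Set.range (g k)) ≤
      (span R (Set.range G)).comap (LinearMap.lsmul R M (c k)) :=
    span_le.mpr <| Set.range_subset_iff.mpr fun j => by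
      simpa [← hcG] using smul_mem _ (c k) (subset_span (Set.mem_range_self j))
  exact hc_self k y hy ▸ hspan (hg k hy)

end Module

theorem stmt_13_general {R M : Type*} [CommRing R] [IsDedekindDomain R]
    [AddCommGroup M] [Module R M] [Module.Finite R M]
    (htor : Module.IsTorsion R M)
    (u : ℕ)
    (hloc : ∀ (m : Ideal R) (hm : m ∈ associatedPrimes R M),
      ∃ s : Finset (LocalizedModule (@Ideal.primeCompl R _ m hm.1) M),
        s.card ≤ u ∧
          Submodule.span (Localization (@Ideal.primeCompl R _ m hm.1))
            ((s : Set (LocalizedModule (@Ideal.primeCompl R _ m hm.1) M))) = ⊤) :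
    ∃ s : Finset M, s.card ≤ u ∧ Submodule.span R (s : Set M) = ⊤ := by
  classical
  obtain ⟨P, _, hP, e, hint⟩ := exists_isInternal_prime_power_torsion htor
  have hmax (p : P) : (p : Ideal R).IsMaximal :=
    (Ideal.isPrime_of_prime (hP p p.2)).isMaximal (hP p p.2).ne_zero
  have hcop : Pairwise (IsCoprime on fun p : P => (p : Ideal R) ^ e p) := fun p q hpq =>
    have := hmax p; have := hmax q
    (Ideal.isCoprime_of_isMaximal (Subtype.coe_ne_coe.mpr hpq)).pow
  have hgen (p : P) :
      ∃ g : Fin u → M, torsionBySet R M ↑((p : Ideal R) ^ e p) ≤ span R (Set.range g) := by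
    have := hmax p
    by_cases hbot : torsionBySet R M ↑((p : Ideal R) ^ e p) = ⊥
    · exact ⟨0, hbot ▸ bot_le⟩
    obtain ⟨s, hsu, hs⟩ := hloc p ((hmax p).mem_associatedPrimes_of_torsionBySet_pow_ne_bot hbot)
    exact exists_fin_torsionBySet_pow_le_span (e p) s hsu hs
  choose g hg using hgen
  obtain ⟨G, hG⟩ :=
    exists_fin_span_eq_top_of_iSup_torsionBySet hcop hint.submodule_iSup_eq_top g hg
  exact ⟨Finset.univ.image G, Finset.card_image_le.trans (by simp), by simpa using hG⟩

/-- Let `M` be a finitely generated torsion module over a Dedekind domain `R`, and let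
`u ≥ 1`.  If for every associated prime `m` of `M` the localization `M_m` can be generated
over `R_m` by at most `u` elements, then `M` can be generated over `R` by at most `u`
elements. -/
theorem stmt_13 {R M : Type*} [CommRing R] [IsDomain R] [IsDedekindDomain R]
    [AddCommGroup M] [Module R M] [Module.Finite R M]
    (htor : Module.IsTorsion R M)
    (u : ℕ) (hu : 0 < u)
    (hloc : ∀ (m : Ideal R) (hm : m ∈ associatedPrimes R M),
      ∃ s : Finset (LocalizedModule (@Ideal.primeCompl R _ m hm.1) M),
        s.card ≤ u ∧
          Submodule.span (Localization (@Ideal.primeCompl R _ m hm.1))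
            ((s : Set (LocalizedModule (@Ideal.primeCompl R _ m hm.1) M))) = ⊤) :
    ∃ s : Finset M, s.card ≤ u ∧ Submodule.span R (s : Set M) = ⊤ :=
  stmt_13_general htor u hloc
end

section
/- Let R be a Dedekind domain, M and N finitely generated R-modules with N torsion (rank 0), and suppose that for every nonzero associated prime m of N there is a surjective R_m-linear map from M_m to N_m^t (t a positive integer). Then there is a surjective R-linear map from M to N^t. -/
/-!
The torsion module `N` is the direct sum of its primary components `N[p ^ k]`, one for each
prime factor `p` of its annihilator. On `N[p ^ k]` every `s ∉ p` acts invertibly (it has an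
inverse modulo `p ^ k`), so `N[p ^ k]` is its own localization at `p` and the given surjection
`M_p → N_p ^ t` descends to a surjection `M → N[p ^ k] ^ t`; if `N[p ^ k] ≠ 0` then `p` is
indeed an associated prime of `N`. As the `p ^ k` are pairwise coprime, the Chinese remainder
theorem makes the product of these maps a surjection `M → ∏ N[p ^ k] ^ t ≅ N ^ t`.
-/

open Function LocalizedModule Submodule UniqueFactorizationMonoid

section

variable {R : Type*} [CommRing R]

theorem Module.IsTorsionBySet.smul_eq_self_of_sub_one_mem {C : Type*} [AddCommGroup C] [Module R C]
    {I : Ideal R} (hC : Module.IsTorsionBySet R C I) {r : R} (hr : r - 1 ∈ I) (c : C) :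
    r • c = c := by
  rw [← sub_eq_zero, ← one_smul R c, smul_smul, mul_one, ← sub_smul]
  exact hC (a := ⟨_, hr⟩)

theorem Ideal.exists_mul_sub_one_mem_pow {p : Ideal R} (hp : p.IsMaximal) (e : ℕ) {s : R}
    (hs : s ∉ p) : ∃ a : R, a * s - 1 ∈ p ^ e := by
  obtain ⟨y, i, hi, hyi⟩ := hp.exists_inv hs
  obtain ⟨a, b, hab⟩ := (show IsCoprime s i from ⟨y, 1, by rwa [one_mul]⟩).pow_right (n := e)
  refine ⟨a, ?_⟩
  rw [show a * s - 1 = -b * i ^ e by linear_combination hab]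
  exact Ideal.mul_mem_left _ _ (Ideal.pow_mem_pow hi e)

theorem mem_associatedPrimes_of_pow_smul_eq_zero [IsNoetherianRing R] {N : Type*}
    [AddCommGroup N] [Module R N] {p : Ideal R} (hp : p.IsMaximal) {e : ℕ} {x : N}
    (hx : x ≠ 0) (hpx : ∀ a ∈ p ^ e, a • x = 0) : p ∈ associatedPrimes R N := by
  obtain ⟨q, hq, hxq⟩ := exists_le_isAssociatedPrime_of_isNoetherianRing R x hx
  have hpq : p ^ e ≤ q := fun a ha => hxq (mem_colon_singleton.mpr (hpx a ha))
  have := hq.isPrime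
  rwa [← hp.eq_of_le this.ne_top (this.le_of_pow_le hpq)] at hq

section Localization

variable {M C : Type*} [AddCommGroup M] [Module R M] [AddCommGroup C] [Module R C]
  {p : Ideal R} [p.IsMaximal] {e : ℕ}

theorem Module.IsTorsionBySet.isUnit_algebraMap_end_of_notMem
    (hC : Module.IsTorsionBySet R C ↑(p ^ e)) {s : R} (hs : s ∉ p) :
    IsUnit (algebraMap R (Module.End R C) s) := by
  obtain ⟨a, ha⟩ := Ideal.exists_mul_sub_one_mem_pow ‹p.IsMaximal› e hs
  have h (x y : R) (hxy : x * y - 1 ∈ p ^ e) :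
      algebraMap R (Module.End R C) x * algebraMap R (Module.End R C) y = 1 := by
    ext c
    exact (mul_smul x y c).symm.trans (hC.smul_eq_self_of_sub_one_mem hxy c)
  exact ⟨⟨_, _, h s a (by rwa [mul_comm]), h a s ha⟩, rfl⟩

theorem surjective_comp_mkLinearMap_of_isTorsionBySet_pow
    (hC : Module.IsTorsionBySet R C ↑(p ^ e))
    {Φ : LocalizedModule p.primeCompl M →ₗ[R] C} (hΦ : Surjective Φ) :
    Surjective (Φ ∘ₗ mkLinearMap p.primeCompl M) := by
  intro c
  obtain ⟨z, rfl⟩ := hΦ c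
  induction z using LocalizedModule.induction_on with
  | h m s =>
    obtain ⟨a, ha⟩ := Ideal.exists_mul_sub_one_mem_pow ‹p.IsMaximal› e s.2
    refine ⟨a • m, ?_⟩
    have : mk (a • m) 1 = (a * s) • mk m s := by
      rw [mul_smul, smul'_mk, ← Submonoid.smul_def, mk_cancel, smul'_mk]
    rw [LinearMap.comp_apply, mkLinearMap_apply, this, map_smul, hC.smul_eq_self_of_sub_one_mem ha]

theorem exists_surjective_of_surjective_localizedModule {N ι : Type*} [AddCommGroup N]
    [Module R N] (hC : Module.IsTorsionBySet R C ↑(p ^ e)) {π : N →ₗ[R] C} (hπ : Surjective π)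
    {g : LocalizedModule p.primeCompl M →ₗ[Localization p.primeCompl]
      (ι → LocalizedModule p.primeCompl N)}
    (hg : Surjective g) : ∃ F : M →ₗ[R] (ι → C), Surjective F := by
  let πₚ := LocalizedModule.lift p.primeCompl π fun s => hC.isUnit_algebraMap_end_of_notMem s.2
  have hπₚ : Surjective πₚ := by
    refine Surjective.of_comp (g := mkLinearMap p.primeCompl N) ?_
    rwa [← LinearMap.coe_comp, LocalizedModule.lift_comp]
  have hΦ : Surjective (LinearMap.piMap (fun _ : ι => πₚ) ∘ₗ g.restrictScalars R) := by
    rw [LinearMap.coe_comp, LinearMap.coe_piMap]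
    exact (Surjective.piMap fun _ => hπₚ).comp hg
  have hCι : Module.IsTorsionBySet R (ι → C) ↑(p ^ e) := fun _ a => funext fun _ => hC (a := a)
  exact ⟨_, surjective_comp_mkLinearMap_of_isTorsionBySet_pow hCι hΦ⟩

theorem exists_surjective_pi_torsionBySet_pow [IsNoetherianRing R] {N ι : Type*}
    [AddCommGroup N] [Module R N] {π : N →ₗ[R] torsionBySet R N ↑(p ^ e)} (hπ : Surjective π)
    (hloc : p ∈ associatedPrimes R N → ∃ g : LocalizedModule p.primeCompl M →ₗ[Localization
      p.primeCompl] (ι → LocalizedModule p.primeCompl N), Surjective g) :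
    ∃ F : M →ₗ[R] (ι → torsionBySet R N ↑(p ^ e)), Surjective F := by
  rcases subsingleton_or_nontrivial (torsionBySet R N ↑(p ^ e)) with _ | _
  · exact ⟨0, surjective_to_subsingleton _⟩
  obtain ⟨⟨x, hxp⟩, hx⟩ := exists_ne (0 : torsionBySet R N ↑(p ^ e))
  have hass : p ∈ associatedPrimes R N :=
    mem_associatedPrimes_of_pow_smul_eq_zero ‹p.IsMaximal› (by simpa using hx)
      fun a ha => (mem_torsionBySet_iff _ _).mp hxp ⟨a, ha⟩
  obtain ⟨g, hg⟩ := hloc hass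
  exact exists_surjective_of_surjective_localizedModule (torsionBySet_isTorsionBySet _) hπ hg

end Localization

theorem Ideal.exists_sub_one_mem_and_forall_mem {ι : Type*} [Finite ι]
    {I : ι → Ideal R} (hI : Pairwise (IsCoprime on I)) (i : ι) :
    ∃ u : R, u - 1 ∈ I i ∧ ∀ j ≠ i, u ∈ I j := by
  classical
  obtain ⟨x, hx⟩ := Ideal.quotientInfToPiQuotient_surj hI (Pi.single i 1)
  obtain ⟨u, rfl⟩ := Ideal.Quotient.mk_surjective x
  have hu (j : ι) : Ideal.Quotient.mk (I j) u = Pi.single (M := fun j => R ⧸ I j) i 1 j :=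
    congrFun hx j
  refine ⟨u, ?_, fun j hj => ?_⟩
  · rw [← Ideal.Quotient.eq, map_one, hu, Pi.single_eq_same]
  · rw [← Ideal.Quotient.eq_zero_iff_mem, hu, Pi.single_eq_of_ne hj]

theorem LinearMap.pi_surjective_of_isCoprime {ι M : Type*} [Finite ι] [AddCommGroup M]
    [Module R M] {C : ι → Type*} [∀ i, AddCommGroup (C i)] [∀ i, Module R (C i)]
    {I : ι → Ideal R} (hI : Pairwise (IsCoprime on I))
    (hC : ∀ i, Module.IsTorsionBySet R (C i) (I i)) (F : ∀ i, M →ₗ[R] C i)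
    (hF : ∀ i, Surjective (F i)) : Surjective (LinearMap.pi F) := by
  classical
  cases nonempty_fintype ι
  choose u hu_one hu_zero using Ideal.exists_sub_one_mem_and_forall_mem hI
  intro c
  choose m hm using fun i => hF i (c i)
  refine ⟨∑ i, u i • m i, funext fun j => ?_⟩
  rw [pi_apply, map_sum, Finset.sum_eq_single j]
  · rw [map_smul, hm, (hC j).smul_eq_self_of_sub_one_mem (hu_one j)]
  · intro i _ hij
    rw [map_smul]
    exact hC j (a := ⟨_, hu_zero i j hij.symm⟩)
  · exact fun h => (h (Finset.mem_univ j)).elim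

end

theorem stmt_15_general {R M N : Type*} [CommRing R] [IsDedekindDomain R]
    [AddCommGroup M] [Module R M]
    [AddCommGroup N] [Module R N] [Module.Finite R N]
    (htor : Module.IsTorsion R N)
    (t : ℕ)
    (hloc : ∀ (m : Ideal R) (hm : m ∈ associatedPrimes R N), m ≠ ⊥ →
      ∃ g : LocalizedModule (@Ideal.primeCompl R _ m hm.1) M →ₗ[Localization
            (@Ideal.primeCompl R _ m hm.1)]
          (Fin t → LocalizedModule (@Ideal.primeCompl R _ m hm.1) N),
        Function.Surjective g) :
    ∃ f : M →ₗ[R] (Fin t → N), Function.Surjective f := by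
  classical
  let P := factors (⊤ : Submodule R N).annihilator
  let k (p : P.toFinset) : ℕ := P.count (p : Ideal R)
  let C (p : P.toFinset) : Submodule R N := torsionBySet R N ↑((p : Ideal R) ^ k p)
  have hprime (p : P.toFinset) : Prime (p : Ideal R) :=
    prime_of_factor _ (Multiset.mem_toFinset.mp p.2)
  have hmax (p : P.toFinset) : (p : Ideal R).IsMaximal :=
    (Ideal.isPrime_of_prime (hprime p)).isMaximal (hprime p).ne_zero
  have hcop : Pairwise (IsCoprime on fun p : P.toFinset => (p : Ideal R) ^ k p) :=
    fun p q hpq => (Ideal.isCoprime_iff_sup_eq.mpr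
      ((hmax p).coprime_of_ne (hmax q) (Subtype.coe_ne_coe.mpr hpq))).pow
  let χ : (∀ p, C p) ≃ₗ[R] N := (DirectSum.linearEquivFunOnFintype R _ fun p => C p).symm ≪≫ₗ
    LinearEquiv.ofBijective (DirectSum.coeLinearMap C) (isInternal_prime_power_torsion htor)
  have hF (p : P.toFinset) : ∃ F : M →ₗ[R] (Fin t → C p), Surjective F :=
    have := hmax p
    exists_surjective_pi_torsionBySet_pow (π := LinearMap.proj p ∘ₗ χ.symm.toLinearMap)
      ((surjective_eval p).comp χ.symm.surjective) fun hass => hloc p hass (hprime p).ne_zero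
  choose F hF using hF
  have hG : Surjective (LinearMap.pi F) := LinearMap.pi_surjective_of_isCoprime hcop
    (fun p c a => funext fun i => torsionBySet_isTorsionBySet _ (x := c i) (a := a)) F hF
  let swap : (∀ p, Fin t → C p) ≃ₗ[R] (Fin t → ∀ p, C p) :=
    { Equiv.piComm _ with map_add' := fun _ _ => rfl, map_smul' := fun _ _ => rfl }
  let e := swap ≪≫ₗ LinearEquiv.piCongrRight fun _ => χ
  exact ⟨e.toLinearMap ∘ₗ LinearMap.pi F, e.surjective.comp hG⟩

/-- Let `R` be a Dedekind domain, `M`, `N` finitely generated `R`-modules with `N`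
torsion, and `t ≥ 1`.  If for every nonzero associated prime `m` of `N` there is a
surjective `R_m`-linear map `M_m → N_m^t`, then there is a surjective `R`-linear map
`M → N^t`. -/
theorem stmt_15 {R M N : Type*} [CommRing R] [IsDomain R] [IsDedekindDomain R]
    [AddCommGroup M] [Module R M] [Module.Finite R M]
    [AddCommGroup N] [Module R N] [Module.Finite R N]
    (htor : Module.IsTorsion R N)
    (t : ℕ) (ht : 0 < t)
    (hloc : ∀ (m : Ideal R) (hm : m ∈ associatedPrimes R N), m ≠ ⊥ →
      ∃ g : LocalizedModule (@Ideal.primeCompl R _ m hm.1) M →ₗ[Localization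
            (@Ideal.primeCompl R _ m hm.1)]
          (Fin t → LocalizedModule (@Ideal.primeCompl R _ m hm.1) N),
        Function.Surjective g) :
    ∃ f : M →ₗ[R] (Fin t → N), Function.Surjective f :=
  stmt_15_general htor t hloc
end

section
/- Let R be a Dedekind domain, M a finitely generated torsion-free R-module of rank r ≥ 1, and N a finitely generated torsion-free R-module of rank s ≥ 1 with r ≥ 1 + s. If, writing M ≅ R^{r-1} ⊕ I and N ≅ R^{s-1} ⊕ J for nonzero ideals I, J, there exists a nonzero ideal K with I ≅ KJ, then there is a surjective R-linear map from M onto N. -/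
/-!
As `K * J ≤ J` with `K * J ≠ 0` in a Dedekind domain, `J = K * J + (a)` for some `a`, so
`J` is a quotient of `R ⊕ K * J ≅ R ⊕ I`. One free summand of `M` beyond the `s - 1` needed
for the free part of `N` is therefore enough to map onto `N`.
-/

open Function

theorem Submodule.exists_surjective_prod_of_sup_span_singleton_eq {R M : Type*} [Semiring R]
    [AddCommMonoid M] [Module R M] {P Q : Submodule R M} {a : M} (h : P ⊔ R ∙ a = Q) :
    ∃ f : (R × P) →ₗ[R] Q, Surjective f := by
  have haQ : a ∈ Q := h ▸ mem_sup_right (mem_span_singleton_self a)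
  have hPQ : P ≤ Q := h ▸ le_sup_left
  refine ⟨(LinearMap.toSpanSingleton R Q ⟨a, haQ⟩).coprod (inclusion hPQ), ?_⟩
  rintro ⟨z, hz⟩
  rw [← h, mem_sup] at hz
  obtain ⟨p, hp, _, hx, rfl⟩ := hz
  obtain ⟨x, rfl⟩ := mem_span_singleton.mp hx
  exact ⟨(x, ⟨p, hp⟩), Subtype.ext (add_comm _ _)⟩

theorem IsDedekindDomain.exists_surjective_prod_of_le {R : Type*} [CommRing R]
    [IsDedekindDomain R] {I J : Ideal R} (hIJ : I ≤ J) (hI : I ≠ ⊥) :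
    ∃ f : (R × I) →ₗ[R] J, Surjective f :=
  have ⟨_, h⟩ := exists_sup_span_eq hIJ hI
  Submodule.exists_surjective_prod_of_sup_span_singleton_eq h

theorem exists_surjective_pi_prod_of_lt {R P Q : Type*} [Semiring R] [AddCommMonoid P]
    [Module R P] [AddCommMonoid Q] [Module R Q] {m n : ℕ} (hnm : n < m)
    (g : (R × P) →ₗ[R] Q) (hg : Surjective g) :
    ∃ f : ((Fin m → R) × P) →ₗ[R] ((Fin n → R) × Q), Surjective f := by
  let restrict : (Fin m → R) →ₗ[R] (Fin (n + 1) → R) := LinearMap.funLeft R R (Fin.castLE hnm)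
  have h_restrict : Surjective restrict :=
    LinearMap.funLeft_surjective_of_injective _ _ _ (Fin.castLE_injective hnm)
  let split : (Fin (n + 1) → R) ≃ₗ[R] (Fin n → R) × R :=
    (Fin.consLinearEquiv R fun _ ↦ R).symm ≪≫ₗ LinearEquiv.prodComm R _ _
  refine ⟨LinearMap.id.prodMap g ∘ₗ (LinearEquiv.prodAssoc R _ _ _).toLinearMap ∘ₗ
    (split.toLinearMap ∘ₗ restrict).prodMap LinearMap.id, ?_⟩
  simp only [LinearMap.coe_comp, LinearMap.coe_prodMap, LinearMap.id_coe, LinearEquiv.coe_coe]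
  exact (surjective_id.prodMap hg).comp <|
    (LinearEquiv.prodAssoc R _ _ _).surjective.comp <|
      (split.surjective.comp h_restrict).prodMap surjective_id

theorem stmt_17_general {R M N : Type*} [CommRing R] [IsDedekindDomain R]
    [AddCommGroup M] [Module R M]
    [AddCommGroup N] [Module R N]
    (r s : ℕ) (hs : 1 ≤ s) (hr : 1 + s ≤ r)
    (I J K : Ideal R) (hJ : J ≠ ⊥) (hK : K ≠ ⊥)
    (eM : M ≃ₗ[R] ((Fin (r - 1) → R) × ↥I))
    (eN : N ≃ₗ[R] ((Fin (s - 1) → R) × ↥J))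
    (eIK : ↥I ≃ₗ[R] ↥(K * J)) :
    ∃ f : M →ₗ[R] N, Function.Surjective f := by
  obtain ⟨g, hg⟩ :=
    IsDedekindDomain.exists_surjective_prod_of_le Ideal.mul_le_right (mul_ne_zero hK hJ)
  obtain ⟨f, hf⟩ := exists_surjective_pi_prod_of_lt (by omega : s - 1 < r - 1) g hg
  let eM' := eM ≪≫ₗ (LinearEquiv.refl R _).prodCongr eIK
  refine ⟨eN.symm.toLinearMap ∘ₗ f ∘ₗ eM'.toLinearMap, ?_⟩
  simp only [LinearMap.coe_comp, LinearEquiv.coe_coe]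
  exact eN.symm.surjective.comp (hf.comp eM'.surjective)

/-- Let `R` be a Dedekind domain, `M ≅ R^(r-1) ⊕ I` a finitely generated torsion-free
`R`-module of rank `r ≥ 1`, and `N ≅ R^(s-1) ⊕ J` a finitely generated torsion-free
`R`-module of rank `s ≥ 1`, where `I` and `J` are nonzero ideals and `r ≥ 1 + s`.  If
there is a nonzero ideal `K` with `I ≅ KJ`, then there is a surjective `R`-linear map
from `M` onto `N`. -/
theorem stmt_17 {R M N : Type*} [CommRing R] [IsDomain R] [IsDedekindDomain R]
    [AddCommGroup M] [Module R M] [Module.Finite R M]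
    [AddCommGroup N] [Module R N] [Module.Finite R N]
    (r s : ℕ) (hs : 1 ≤ s) (hr : 1 + s ≤ r)
    (I J K : Ideal R) (hI : I ≠ ⊥) (hJ : J ≠ ⊥) (hK : K ≠ ⊥)
    (eM : M ≃ₗ[R] ((Fin (r - 1) → R) × ↥I))
    (eN : N ≃ₗ[R] ((Fin (s - 1) → R) × ↥J))
    (eIK : ↥I ≃ₗ[R] ↥(K * J)) :
    ∃ f : M →ₗ[R] N, Function.Surjective f :=
  stmt_17_general r s hs hr I J K hJ hK eM eN eIK
end

section
/- Let R be a commutative ring, M an R-module, N a finitely presented R-module, and f : M → N an R-linear map whose localization at a prime p is a split surjection of R_p-modules. Then there exist an R-linear map g : N → M and an element s ∈ R \ p such that f ∘ g equals multiplication by s on N; consequently, for every prime q not containing s, the localization of f at q is a split surjection. -/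
/-- Let `N` be a finitely presented `R`-module and `f : M → N` an `R`-linear map whose
localization at a prime `p` is a split surjection.  Then there are an `R`-linear map
`g : N → M` and `s ∈ R \ p` with `f ∘ g = s • id`; consequently, for every prime `q`
with `s ∉ q`, the localization of `f` at `q` is a split surjection. -/
theorem stmt_19 {R M N : Type*} [CommRing R] [AddCommGroup M] [Module R M]
    [AddCommGroup N] [Module R N] [Module.FinitePresentation R N]
    (f : M →ₗ[R] N) (p : Ideal R) [p.IsPrime]
    (hsplit : ∃ h : LocalizedModule p.primeCompl N →ₗ[Localization p.primeCompl]
        LocalizedModule p.primeCompl M,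
      LocalizedModule.map p.primeCompl f ∘ₗ h = LinearMap.id) :
    ∃ (g : N →ₗ[R] M) (s : R), s ∉ p ∧ f ∘ₗ g = s • LinearMap.id ∧
      ∀ (q : Ideal R) (_ : q.IsPrime), s ∉ q →
        ∃ h : LocalizedModule q.primeCompl N →ₗ[Localization q.primeCompl]
            LocalizedModule q.primeCompl M,
          LocalizedModule.map q.primeCompl f ∘ₗ h = LinearMap.id := by
  obtain ⟨h, hh⟩ := hsplit
  -- lift `h ∘ₗ mkLinearMap N : N →ₗ[R] M_p` along `mkLinearMap M`
  obtain ⟨g₀, s₀, hg₀⟩ := Module.FinitePresentation.exists_lift_of_isLocalizedModule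
    p.primeCompl (LocalizedModule.mkLinearMap p.primeCompl M)
    ((h.restrictScalars R) ∘ₗ LocalizedModule.mkLinearMap p.primeCompl N)
  -- after localization at `p`, `f ∘ g₀ = s₀ • id`
  have key : (LocalizedModule.mkLinearMap p.primeCompl N) ∘ₗ (f ∘ₗ g₀) =
      (LocalizedModule.mkLinearMap p.primeCompl N) ∘ₗ ((s₀ : R) • LinearMap.id) := by
    ext x
    have h1 : LocalizedModule.mkLinearMap p.primeCompl M (g₀ x) =
        (s₀ : R) • h (LocalizedModule.mkLinearMap p.primeCompl N x) := by
      simpa [Submonoid.smul_def] using congr($hg₀ x)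
    have h2 : LocalizedModule.map p.primeCompl f
          (h (LocalizedModule.mkLinearMap p.primeCompl N x)) =
        LocalizedModule.mkLinearMap p.primeCompl N x :=
      LinearMap.congr_fun hh (LocalizedModule.mkLinearMap p.primeCompl N x)
    have h3 : LocalizedModule.map p.primeCompl f
          (LocalizedModule.mkLinearMap p.primeCompl M (g₀ x)) =
        LocalizedModule.mkLinearMap p.primeCompl N (f (g₀ x)) := by
      simp [LocalizedModule.mkLinearMap_apply]
    simp only [LinearMap.coe_comp, Function.comp_apply, LinearMap.smul_apply, LinearMap.id_coe,
      id_eq]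
    rw [← h3, h1, LinearMap.map_smul_of_tower, h2, map_smul]
  obtain ⟨s₁, hs₁⟩ := Module.Finite.exists_smul_of_comp_eq_of_isLocalizedModule p.primeCompl
    (LocalizedModule.mkLinearMap p.primeCompl N) _ _ key
  have hfg : f ∘ₗ ((s₁ : R) • g₀) = ((s₁ : R) * (s₀ : R)) • LinearMap.id := by
    ext x
    have := congr($hs₁ x)
    simp only [Submonoid.smul_def, LinearMap.smul_apply, LinearMap.coe_comp, Function.comp_apply,
      LinearMap.id_coe, id_eq] at this ⊢
    rw [map_smul, this, mul_smul]
  refine ⟨(s₁ : R) • g₀, (s₁ : R) * (s₀ : R), mul_mem s₁.2 s₀.2, hfg, ?_⟩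
  intro q hq hsq
  have hs : ((s₁ : R) * (s₀ : R)) ∈ q.primeCompl := hsq
  have hu : IsUnit (algebraMap R (Localization q.primeCompl) ((s₁ : R) * (s₀ : R))) :=
    IsLocalization.map_units _ ⟨_, hs⟩
  refine ⟨(↑hu.unit⁻¹ : Localization q.primeCompl) •
    LocalizedModule.map q.primeCompl ((s₁ : R) • g₀), ?_⟩
  ext x
  induction x using LocalizedModule.induction_on with
  | h n t =>
    simp only [LinearMap.coe_comp, Function.comp_apply, LinearMap.smul_apply, LinearMap.id_coe,
      id_eq, map_smul, LocalizedModule.map_mk]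
    have : f (((s₁ : R) • g₀) n) = ((s₁ : R) * (s₀ : R)) • n := congr($hfg n)
    simp only [LinearMap.smul_apply] at this
    rw [LocalizedModule.smul'_mk, LocalizedModule.map_mk, this,
      ← LocalizedModule.smul'_mk,
      ← algebraMap_smul (Localization q.primeCompl) ((s₁ : R) * (s₀ : R)) (LocalizedModule.mk n t),
      smul_smul, IsUnit.val_inv_mul, one_smul]
end
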